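/- arXiv:1102.1419 — 2 statements merged into one kernel-verified Lean document; each statement's English description precedes it below -/
import Mathlib

section
/- Let (X,p) be a TVS-cone metric space over E with cone P, and equip X with the cone metric topology τ_p. Then (X, τ_p) is a paracompact topological space and a T4 space (Hausdorff and normal). -/
open Filter Topology

section Defs

variable {E : Type*} [AddCommGroup E] [Module ℝ E] [TopologicalSpace E]

/-- `P` is a closed, pointed convex cone with nonempty interior in the TVS `E`. -/
structure IsTVSCone (P : Set E) : Prop where
  add_mem : ∀ ⦃a⦄, a ∈ P → ∀ ⦃b⦄, b ∈ P → a + b ∈ P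
  smul_mem : ∀ (r : ℝ), 0 ≤ r → ∀ ⦃a⦄, a ∈ P → r • a ∈ P
  pointed : ∀ a, a ∈ P → -a ∈ P → a = 0
  isClosed : IsClosed P
  int_nonempty : (interior P).Nonempty

/-- `a ≤ b` with respect to the cone `P`. -/
def ConeLe (P : Set E) (a b : E) : Prop := b - a ∈ P

/-- `a ≪ b` with respect to the cone `P`. -/
def ConeLt (P : Set E) (a b : E) : Prop := b - a ∈ interior P

/-- `p : X × X → E` is a TVS-cone metric over the cone `P`. -/
structure IsConeMetric (P : Set E) {X : Type*} (p : X → X → E) : Prop where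
  nonneg : ∀ x y, ConeLe P 0 (p x y)
  eq_zero_iff : ∀ x y, p x y = 0 ↔ x = y
  symm : ∀ x y, p x y = p y x
  triangle : ∀ x y z, ConeLe P (p x y) (p x z + p z y)

/-- The sequence `x` cone-converges to `a`. -/
def ConeConverges (P : Set E) {X : Type*} (p : X → X → E) (x : ℕ → X) (a : X) : Prop :=
  ∀ c, c ∈ interior P → ∃ N, ∀ n ≥ N, ConeLt P (p (x n) a) c

/-- The sequence `x` is cone-Cauchy. -/
def ConeCauchy (P : Set E) {X : Type*} (p : X → X → E) (x : ℕ → X) : Prop :=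
  ∀ c, c ∈ interior P → ∃ N, ∀ n ≥ N, ∀ m ≥ N, ConeLt P (p (x n) (x m)) c

/-- `(X, p)` is cone-complete. -/
def ConeComplete (P : Set E) {X : Type*} (p : X → X → E) : Prop :=
  ∀ x : ℕ → X, ConeCauchy P p x → ∃ a, ConeConverges P p x a

/-- The nonlinear scalarization ξ_e(y) = inf {t : t • e - y ∈ P}. -/
noncomputable def xiScal (P : Set E) (e y : E) : ℝ := sInf {t : ℝ | t • e - y ∈ P}

/-- The open ball `B(x, c) = {y : p x y ≪ c}`. -/
def coneBall (P : Set E) {X : Type*} (p : X → X → E) (x : X) (c : E) : Set X :=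
  {y | ConeLt P (p x y) c}

/-- The cone metric topology `τ_p`, generated by the balls `B(x,c)`, `c ≫ 0`. -/
def coneTopology (P : Set E) {X : Type*} (p : X → X → E) : TopologicalSpace X :=
  TopologicalSpace.generateFrom {s | ∃ x c, c ∈ interior P ∧ s = coneBall P p x c}

end Defs

/-! Fix `e ≫ 0`. The scalarization `ξ_e(y) = inf {t : t • e - y ∈ P}` is monotone and subadditive
for the cone order, so `d(x, y) = ξ_e(p x y)` is a real metric on `X`. Since `ξ_e(y) < t` exactly
when `y ≪ t • e`, the `d`-balls are the cone balls `B(x, t • e)`, and every cone ball `B(x, c)`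
contains such a ball around each of its points. Hence `τ_p` is the topology of `d`, and metric
spaces are paracompact and `T4`. -/

section ConeOrder

variable {E : Type*} [AddCommGroup E] [Module ℝ E] [TopologicalSpace E] {P : Set E}

theorem IsTVSCone.zero_mem (hP : IsTVSCone P) : (0 : E) ∈ P := by
  obtain ⟨e, he⟩ := hP.int_nonempty
  simpa using hP.smul_mem 0 le_rfl (interior_subset he)

theorem IsTVSCone.nonneg_of_smul_mem (hP : IsTVSCone P) {e : E} (he : e ∈ P) (he0 : e ≠ 0)
    {t : ℝ} (ht : t • e ∈ P) : 0 ≤ t := by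
  by_contra! htneg
  have hneg : -e ∈ P := by
    have := hP.smul_mem (-t⁻¹) (by simpa using htneg.le) ht
    rwa [smul_smul, neg_mul, inv_mul_cancel₀ htneg.ne, neg_one_smul] at this
  exact he0 (hP.pointed e he hneg)

theorem IsTVSCone.add_mem_interior [IsTopologicalAddGroup E] (hP : IsTVSCone P) {a b : E}
    (ha : a ∈ interior P) (hb : b ∈ P) : a + b ∈ interior P := by
  have hsub : (· + b) '' interior P ⊆ P := by
    rintro _ ⟨v, hv, rfl⟩
    exact hP.add_mem (interior_subset hv) hb
  exact interior_maximal hsub (isOpenMap_add_right b _ isOpen_interior) ⟨a, ha, rfl⟩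

theorem IsTVSCone.smul_mem_interior [ContinuousSMul ℝ E] (hP : IsTVSCone P) {r : ℝ} (hr : 0 < r)
    {a : E} (ha : a ∈ interior P) : r • a ∈ interior P := by
  have hsub : (r • ·) '' interior P ⊆ P := by
    rintro _ ⟨v, hv, rfl⟩
    exact hP.smul_mem r hr.le (interior_subset hv)
  exact interior_maximal hsub (isOpenMap_smul₀ hr.ne' _ isOpen_interior) ⟨a, ha, rfl⟩

variable [IsTopologicalAddGroup E] [ContinuousSMul ℝ E]

theorem IsOpen.exists_pos_sub_smul_mem {U : Set E} (hU : IsOpen U) {a : E} (ha : a ∈ U) (v : E) :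
    ∃ ε : ℝ, 0 < ε ∧ a - ε • v ∈ U := by
  have hcont : Tendsto (fun δ : ℝ => a - δ • v) (𝓝 0) (𝓝 a) := by
    have : Continuous fun δ : ℝ => a - δ • v := by fun_prop
    simpa using this.tendsto 0
  have hev : ∀ᶠ δ in 𝓝[>] (0 : ℝ), a - δ • v ∈ U :=
    (hcont.eventually (hU.mem_nhds ha)).filter_mono nhdsWithin_le_nhds
  obtain ⟨ε, hεU, hε⟩ := (hev.and self_mem_nhdsWithin).exists
  exact ⟨ε, hε, hεU⟩

theorem IsTVSCone.exists_smul_sub_mem (hP : IsTVSCone P) {e : E} (he : e ∈ interior P) (y : E) :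
    ∃ t : ℝ, t • e - y ∈ P := by
  obtain ⟨ε, hε, hmem⟩ := isOpen_interior.exists_pos_sub_smul_mem he y
  refine ⟨ε⁻¹, ?_⟩
  have := hP.smul_mem ε⁻¹ (inv_nonneg.mpr hε.le) (interior_subset hmem)
  rwa [smul_sub, inv_smul_smul₀ hε.ne'] at this

theorem IsTVSCone.eq_univ_of_zero_mem_interior (hP : IsTVSCone P) (h0 : (0 : E) ∈ interior P) :
    P = Set.univ := by
  refine Set.eq_univ_of_forall fun v => ?_
  obtain ⟨t, ht⟩ := hP.exists_smul_sub_mem h0 (-v)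
  simpa using ht

end ConeOrder

section Scalarization

variable {E : Type*} [AddCommGroup E] [Module ℝ E] [TopologicalSpace E]
  [IsTopologicalAddGroup E] [ContinuousSMul ℝ E] {P : Set E} {e : E}

theorem IsTVSCone.bddBelow_xiScal_set (hP : IsTVSCone P) (he : e ∈ interior P) (he0 : e ≠ 0)
    (y : E) : BddBelow {t : ℝ | t • e - y ∈ P} := by
  obtain ⟨s, hs⟩ := hP.exists_smul_sub_mem he (-y)
  refine ⟨-s, fun t ht => ?_⟩
  have hsum : t • e - y + (s • e - -y) = (t + s) • e := by rw [add_smul]; abel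
  have := hP.nonneg_of_smul_mem (interior_subset he) he0 (hsum ▸ hP.add_mem ht hs)
  linarith

theorem IsTVSCone.xiScal_le (hP : IsTVSCone P) (he : e ∈ interior P) (he0 : e ≠ 0) {y : E}
    {t : ℝ} (h : t • e - y ∈ P) : xiScal P e y ≤ t :=
  csInf_le (hP.bddBelow_xiScal_set he he0 y) h

theorem IsTVSCone.smul_xiScal_sub_mem (hP : IsTVSCone P) (he : e ∈ interior P) (he0 : e ≠ 0)
    (y : E) : xiScal P e y • e - y ∈ P := by
  have hclosed : IsClosed {t : ℝ | t • e - y ∈ P} :=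
    hP.isClosed.preimage ((continuous_id.smul continuous_const).sub continuous_const)
  exact hclosed.csInf_mem (hP.exists_smul_sub_mem he y) (hP.bddBelow_xiScal_set he he0 y)

theorem IsTVSCone.xiScal_zero (hP : IsTVSCone P) (he : e ∈ interior P) (he0 : e ≠ 0) :
    xiScal P e 0 = 0 := by
  refine le_antisymm (hP.xiScal_le he he0 (by simpa using hP.zero_mem)) ?_
  refine le_csInf (hP.exists_smul_sub_mem he 0) fun t ht => ?_
  exact hP.nonneg_of_smul_mem (interior_subset he) he0 (by simpa using ht)

theorem IsTVSCone.xiScal_mono (hP : IsTVSCone P) (he : e ∈ interior P) (he0 : e ≠ 0) {y z : E}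
    (h : z - y ∈ P) : xiScal P e y ≤ xiScal P e z := by
  refine hP.xiScal_le he he0 ?_
  have hsum : xiScal P e z • e - z + (z - y) = xiScal P e z • e - y := by abel
  exact hsum ▸ hP.add_mem (hP.smul_xiScal_sub_mem he he0 z) h

theorem IsTVSCone.xiScal_add_le (hP : IsTVSCone P) (he : e ∈ interior P) (he0 : e ≠ 0)
    (y z : E) : xiScal P e (y + z) ≤ xiScal P e y + xiScal P e z := by
  refine hP.xiScal_le he he0 ?_
  have hsum : xiScal P e y • e - y + (xiScal P e z • e - z)
      = (xiScal P e y + xiScal P e z) • e - (y + z) := by rw [add_smul]; abel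
  exact hsum ▸ hP.add_mem (hP.smul_xiScal_sub_mem he he0 y) (hP.smul_xiScal_sub_mem he he0 z)

theorem IsTVSCone.xiScal_lt_iff (hP : IsTVSCone P) (he : e ∈ interior P) (he0 : e ≠ 0) {y : E}
    {t : ℝ} : xiScal P e y < t ↔ t • e - y ∈ interior P := by
  constructor
  · intro h
    obtain ⟨s, hs, hst⟩ := exists_lt_of_csInf_lt (hP.exists_smul_sub_mem he y) h
    have hsum : (t - s) • e + (s • e - y) = t • e - y := by rw [sub_smul]; abel
    exact hsum ▸ hP.add_mem_interior (hP.smul_mem_interior (sub_pos.mpr hst) he) hs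
  · intro h
    obtain ⟨ε, hε, hmem⟩ := isOpen_interior.exists_pos_sub_smul_mem h e
    have hle : xiScal P e y ≤ t - ε := by
      refine hP.xiScal_le he he0 ?_
      rw [sub_smul, sub_right_comm]
      exact interior_subset hmem
    linarith

end Scalarization

namespace IsConeMetric

variable {E X : Type*} [AddCommGroup E] [Module ℝ E] [TopologicalSpace E]
  [IsTopologicalAddGroup E] [ContinuousSMul ℝ E] {P : Set E} {p : X → X → E} {e : E}

theorem subsingleton_of_zero_mem_interior (hP : IsTVSCone P) (hp : IsConeMetric P p)
    (h0 : (0 : E) ∈ interior P) : Subsingleton X := by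
  refine ⟨fun x y => (hp.eq_zero_iff x y).mp (hP.pointed _ ?_ ?_)⟩ <;>
    simp [hP.eq_univ_of_zero_mem_interior h0]

theorem exists_coneBall_subset_coneBall (hP : IsTVSCone P) (hp : IsConeMetric P p) {x y : X}
    {c : E} (hy : y ∈ coneBall P p x c) :
    ∃ ε : ℝ, 0 < ε ∧ coneBall P p y (ε • e) ⊆ coneBall P p x c := by
  obtain ⟨ε, hε, hmem⟩ := isOpen_interior.exists_pos_sub_smul_mem hy e
  refine ⟨ε, hε, fun z (hz : ε • e - p y z ∈ interior P) => ?_⟩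
  change c - p x z ∈ interior P
  have hsum : c - p x y - ε • e + (ε • e - p y z + (p x y + p y z - p x z)) = c - p x z := by
    abel
  exact hsum ▸ hP.add_mem_interior hmem (hP.add_mem (interior_subset hz) (hp.triangle x z y))

noncomputable abbrev scalarizedMetricSpace (hP : IsTVSCone P) (hp : IsConeMetric P p)
    (he : e ∈ interior P) (he0 : e ≠ 0) : MetricSpace X where
  dist x y := xiScal P e (p x y)
  dist_self x := by simpa [(hp.eq_zero_iff x x).mpr rfl] using hP.xiScal_zero he he0
  dist_comm x y := by rw [hp.symm]
  dist_triangle x y z :=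
    (hP.xiScal_mono he he0 (hp.triangle x z y)).trans (hP.xiScal_add_le he he0 _ _)
  eq_of_dist_eq_zero {x y} h := by
    have hmem := hP.smul_xiScal_sub_mem he he0 (p x y)
    rw [show xiScal P e (p x y) = 0 from h, zero_smul, zero_sub] at hmem
    exact (hp.eq_zero_iff x y).mp (hP.pointed _ (by simpa [ConeLe] using hp.nonneg x y) hmem)

theorem coneTopology_eq (hP : IsTVSCone P) (hp : IsConeMetric P p) (he : e ∈ interior P)
    (he0 : e ≠ 0) :
    coneTopology P p = (hp.scalarizedMetricSpace hP he he0).toUniformSpace.toTopologicalSpace := by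
  let := hp.scalarizedMetricSpace hP he he0
  have hball : ∀ (x : X) (t : ℝ), Metric.ball x t = coneBall P p x (t • e) := fun x t => by
    ext z
    change xiScal P e (p z x) < t ↔ t • e - p x z ∈ interior P
    rw [hp.symm]
    exact hP.xiScal_lt_iff he he0
  refine le_antisymm (fun s hs => ?_) (le_generateFrom ?_)
  · refine @isOpen_iff_forall_mem_open X (coneTopology P p) s |>.mpr fun x hx => ?_
    obtain ⟨ε, hε, hsub⟩ := Metric.isOpen_iff.mp hs x hx
    rw [hball] at hsub
    refine ⟨_, hsub, .basic _ ⟨x, _, hP.smul_mem_interior hε he, rfl⟩, ?_⟩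
    rw [← hball]
    exact Metric.mem_ball_self hε
  · rintro _ ⟨x, c, -, rfl⟩
    refine Metric.isOpen_iff.mpr fun y hy => ?_
    obtain ⟨ε, hε, hsub⟩ := hp.exists_coneBall_subset_coneBall hP hy
    exact ⟨ε, hε, hball y ε ▸ hsub⟩

end IsConeMetric

theorem stmt_8_general {E X : Type*} [AddCommGroup E] [Module ℝ E] [TopologicalSpace E]
    [IsTopologicalAddGroup E] [ContinuousSMul ℝ E]
    (P : Set E) (hP : IsTVSCone P) (p : X → X → E) (hp : IsConeMetric P p) :
    @ParacompactSpace X (coneTopology P p) ∧ @T4Space X (coneTopology P p) := by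
  obtain ⟨e, he⟩ := hP.int_nonempty
  rcases eq_or_ne e 0 with rfl | he0
  · have := hp.subsingleton_of_zero_mem_interior hP he
    let := coneTopology P p
    exact ⟨inferInstance, inferInstance⟩
  · let := hp.scalarizedMetricSpace hP he he0
    rw [hp.coneTopology_eq hP he he0]
    exact ⟨inferInstance, inferInstance⟩

/-- `(X, τ_p)` is paracompact and `T4`. -/
theorem stmt_8 {E X : Type*} [AddCommGroup E] [Module ℝ E] [TopologicalSpace E]
    [IsTopologicalAddGroup E] [ContinuousSMul ℝ E] [T2Space E] [Nonempty X]
    (P : Set E) (hP : IsTVSCone P) (p : X → X → E) (hp : IsConeMetric P p) :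
    @ParacompactSpace X (coneTopology P p) ∧ @T4Space X (coneTopology P p) :=
  stmt_8_general P hP p hp
end

section
/- Let (X,p) be a TVS-cone metric space over E with cone P, equipped with the cone metric topology τ_p. Then (X, τ_p) is compact if and only if it is sequentially compact, i.e., every sequence in X has a subsequence that cone-converges to some point of X. -/
open Filter Topology

/-!
For `e ≫ 0` the Minkowski gauge `ξ` of `e - P` is sublinear, monotone for the cone order, and
satisfies `ξ y < t ↔ y ≪ t • e` for `t > 0`. Hence `d x y = ξ (p x y)` is a metric whose balls
`B_d(x, ε)` are the cone balls `B(x, ε • e)`; since every `c ≫ 0` dominates some `ε • e`, these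
balls generate `τ_p` and cone convergence is `d`-convergence. The theorem is then the equivalence
of compactness and sequential compactness in metric spaces.
-/

open Pointwise

section ConeMetric

variable {E : Type*} [AddCommGroup E] [Module ℝ E] [TopologicalSpace E] {P : Set E}

namespace IsTVSCone

lemma convex (hP : IsTVSCone P) : Convex ℝ P :=
  fun _ hx _ hy a b ha hb _ => hP.add_mem (hP.smul_mem a ha hx) (hP.smul_mem b hb hy)

lemma smul_mem_iff (hP : IsTVSCone P) {r : ℝ} (hr : 0 < r) {a : E} : r • a ∈ P ↔ a ∈ P :=
  ⟨fun h => by simpa [hr.ne'] using hP.smul_mem r⁻¹ (inv_nonneg.2 hr.le) h,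
    fun h => hP.smul_mem r hr.le h⟩

lemma add_mem_interior_s9 [IsTopologicalAddGroup E] (hP : IsTVSCone P) {a b : E}
    (ha : a ∈ interior P) (hb : b ∈ P) : a + b ∈ interior P := by
  have hsub : (· + b) '' interior P ⊆ P := by
    rintro _ ⟨x, hx, rfl⟩
    exact hP.add_mem (interior_subset hx) hb
  exact interior_maximal hsub ((Homeomorph.addRight b).isOpenMap _ isOpen_interior) ⟨a, ha, rfl⟩

lemma smul_mem_interior_s9 [ContinuousSMul ℝ E] (hP : IsTVSCone P) {r : ℝ} (hr : 0 < r) {a : E}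
    (ha : a ∈ interior P) : r • a ∈ interior P := by
  have hmem : r • a ∈ interior (r • P) := by
    rw [interior_smul₀ hr.ne']
    exact Set.smul_mem_smul_set ha
  refine interior_mono ?_ hmem
  rintro _ ⟨x, hx, rfl⟩
  exact hP.smul_mem r hr.le hx

end IsTVSCone

lemma exists_sub_smul_mem_interior [IsTopologicalAddGroup E] [ContinuousSMul ℝ E] {c : E}
    (hc : c ∈ interior P) (e : E) {t : ℝ} (ht : 0 < t) :
    ∃ δ ∈ Set.Ioo 0 t, c - δ • e ∈ interior P := by
  have hcont : Tendsto (fun δ : ℝ => c - δ • e) (𝓝 0) (𝓝 c) :=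
    (continuous_const.sub (continuous_id.smul continuous_const)).tendsto' 0 c (by simp)
  have hnear : ∀ᶠ δ in 𝓝[>] (0 : ℝ), c - δ • e ∈ interior P :=
    nhdsWithin_le_nhds (hcont.eventually_mem (isOpen_interior.mem_nhds hc))
  obtain ⟨δ, hδ, hmem⟩ := (hnear.and (Ioo_mem_nhdsGT ht)).exists
  exact ⟨δ, hmem, hδ⟩

section Gauge

/-- The Minkowski gauge of `e - P`; on `P` it is the nonlinear scalarization `xiScal P e`. -/
noncomputable def coneGauge (P : Set E) (e : E) : E → ℝ := gauge {x | e - x ∈ P}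

variable {e : E}

lemma convex_setOf_sub_mem (hP : IsTVSCone P) : Convex ℝ {x | e - x ∈ P} := by
  intro x hx y hy a b ha hb hab
  have hcomb : e - (a • x + b • y) = a • (e - x) + b • (e - y) := by
    linear_combination (norm := module) (-hab) • e
  simpa only [Set.mem_ofPred_eq, hcomb] using hP.convex hx hy ha hb hab

lemma mem_smul_setOf_sub_mem_iff (hP : IsTVSCone P) {r : ℝ} (hr : 0 < r) {y : E} :
    y ∈ r • {x | e - x ∈ P} ↔ r • e - y ∈ P := by
  rw [Set.mem_smul_set_iff_inv_smul_mem₀ hr.ne', Set.mem_ofPred_eq, ← hP.smul_mem_iff hr,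
    smul_sub, smul_inv_smul₀ hr.ne']

variable [IsTopologicalAddGroup E] [ContinuousSMul ℝ E]

lemma absorbent_setOf_sub_mem (he : e ∈ interior P) : Absorbent ℝ {x | e - x ∈ P} :=
  absorbent_nhds_zero <|
    (continuous_const.sub continuous_id).tendsto' 0 e (by simp) (mem_interior_iff_mem_nhds.1 he)

lemma coneGauge_lt_iff (hP : IsTVSCone P) (he : e ∈ interior P) {t : ℝ} (ht : 0 < t) {y : E} :
    coneGauge P e y < t ↔ t • e - y ∈ interior P := by
  constructor
  · intro hlt
    obtain ⟨r, hr, hrt, hy⟩ := exists_lt_of_gauge_lt (absorbent_setOf_sub_mem he) hlt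
    rw [mem_smul_setOf_sub_mem_iff hP hr] at hy
    have hsplit : t • e - y = (t - r) • e + (r • e - y) := by module
    rw [hsplit]
    exact hP.add_mem_interior_s9 (hP.smul_mem_interior_s9 (sub_pos.2 hrt) he) hy
  · intro hy
    obtain ⟨δ, ⟨hδ, hδt⟩, hmem⟩ := exists_sub_smul_mem_interior hy e ht
    have hy' : y ∈ (t - δ) • {x | e - x ∈ P} := by
      rw [mem_smul_setOf_sub_mem_iff hP (sub_pos.2 hδt), sub_smul, sub_right_comm]
      exact interior_subset hmem
    exact (gauge_le_of_mem (sub_pos.2 hδt).le hy').trans_lt (sub_lt_self t hδ)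

lemma coneGauge_mono (hP : IsTVSCone P) (he : e ∈ interior P) {a b : E} (hab : ConeLe P a b) :
    coneGauge P e a ≤ coneGauge P e b := by
  refine le_of_forall_gt fun t ht => ?_
  have ht0 : 0 < t := (gauge_nonneg b).trans_lt ht
  rw [coneGauge_lt_iff hP he ht0] at ht ⊢
  simpa using hP.add_mem_interior_s9 ht hab

lemma coneGauge_add_le (hP : IsTVSCone P) (he : e ∈ interior P) (a b : E) :
    coneGauge P e (a + b) ≤ coneGauge P e a + coneGauge P e b :=
  gauge_add_le (convex_setOf_sub_mem hP) (absorbent_setOf_sub_mem he) a b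

lemma eq_zero_of_coneGauge_eq_zero (hP : IsTVSCone P) (he : e ∈ interior P) {y : E} (hy : y ∈ P)
    (h : coneGauge P e y = 0) : y = 0 := by
  have hpos : ∀ t : ℝ, 0 < t → t • e - y ∈ P := fun t ht =>
    interior_subset ((coneGauge_lt_iff hP he ht).1 (h ▸ ht))
  have hlim : Tendsto (fun t : ℝ => t • e - y) (𝓝[>] 0) (𝓝 (-y)) :=
    (((continuous_id.smul continuous_const).sub continuous_const).tendsto' 0 (-y)
      (by simp)).mono_left nhdsWithin_le_nhds
  exact hP.pointed y hy (hP.isClosed.mem_of_tendsto hlim (eventually_nhdsWithin_of_forall hpos))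

end Gauge

namespace IsConeMetric

variable {X : Type*} {p : X → X → E}

lemma coneBall_subset [IsTopologicalAddGroup E] (hP : IsTVSCone P) (hp : IsConeMetric P p)
    {x y : X} {c d : E} (h : ConeLe P d (c - p x y)) : coneBall P p y d ⊆ coneBall P p x c := by
  intro z hz
  have hsplit : c - p x z = (d - p y z) + (c - p x y - d) + (p x y + p y z - p x z) := by abel
  show c - p x z ∈ interior P
  rw [hsplit]
  exact hP.add_mem_interior_s9 (hP.add_mem_interior_s9 hz h) (hp.triangle x z y)

variable [IsTopologicalAddGroup E] [ContinuousSMul ℝ E] {e : E}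

noncomputable abbrev gaugeMetricSpace (hP : IsTVSCone P) (hp : IsConeMetric P p)
    (he : e ∈ interior P) : MetricSpace X where
  dist x y := coneGauge P e (p x y)
  dist_self x := by simp [coneGauge, (hp.eq_zero_iff x x).2 rfl]
  dist_comm x y := by rw [hp.symm]
  dist_triangle x y z :=
    (coneGauge_mono hP he (hp.triangle x z y)).trans (coneGauge_add_le hP he _ _)
  eq_of_dist_eq_zero h :=
    (hp.eq_zero_iff _ _).1 (eq_zero_of_coneGauge_eq_zero hP he
      (by simpa [ConeLe] using hp.nonneg _ _) h)

lemma coneTopology_eq_gaugeMetricSpace (hP : IsTVSCone P) (hp : IsConeMetric P p)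
    (he : e ∈ interior P) :
    coneTopology P p = (hp.gaugeMetricSpace hP he).toUniformSpace.toTopologicalSpace := by
  let := hp.gaugeMetricSpace hP he
  have ball_eq : ∀ x (ε : ℝ), 0 < ε → Metric.ball x ε = coneBall P p x (ε • e) := by
    intro x ε hε
    ext y
    show coneGauge P e (p y x) < ε ↔ ε • e - p x y ∈ interior P
    rw [hp.symm, coneGauge_lt_iff hP he hε]
  refine le_antisymm (fun s hs => ?_) (le_generateFrom ?_)
  · refine (@isOpen_iff_forall_mem_open _ (coneTopology P p) _).2 fun x hx => ?_
    obtain ⟨ε, hε, hball⟩ := Metric.isOpen_iff.1 hs x hx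
    exact ⟨_, hball, .basic _ ⟨x, ε • e, hP.smul_mem_interior_s9 hε he, ball_eq x ε hε⟩,
      Metric.mem_ball_self hε⟩
  · rintro _ ⟨x, c, -, rfl⟩
    refine Metric.isOpen_iff.2 fun y hy => ?_
    obtain ⟨δ, ⟨hδ, -⟩, hmem⟩ := exists_sub_smul_mem_interior hy e one_pos
    exact ⟨δ, hδ, (ball_eq y δ hδ).trans_subset (coneBall_subset hP hp (interior_subset hmem))⟩

/-- `gaugeMetricSpace` with its topology made definitionally `coneTopology P p`. -/
noncomputable abbrev coneMetricSpace (hP : IsTVSCone P) (hp : IsConeMetric P p)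
    (he : e ∈ interior P) : MetricSpace X :=
  @MetricSpace.replaceTopology X (coneTopology P p) (hp.gaugeMetricSpace hP he)
    (hp.coneTopology_eq_gaugeMetricSpace hP he)

lemma coneConverges_iff_tendsto (hP : IsTVSCone P) (hp : IsConeMetric P p) {u : ℕ → X} {a : X} :
    ConeConverges P p u a ↔ Tendsto u atTop (@nhds X (coneTopology P p) a) := by
  obtain ⟨e, he⟩ := hP.int_nonempty
  let := hp.coneMetricSpace hP he
  rw [Metric.tendsto_atTop]
  constructor
  · intro h ε hε
    obtain ⟨N, hN⟩ := h (ε • e) (hP.smul_mem_interior_s9 hε he)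
    exact ⟨N, fun n hn => (coneGauge_lt_iff hP he hε).2 (hN n hn)⟩
  · intro h c hc
    obtain ⟨δ, ⟨hδ, -⟩, hmem⟩ := exists_sub_smul_mem_interior hc e one_pos
    obtain ⟨N, hN⟩ := h δ hδ
    refine ⟨N, fun n hn => ?_⟩
    have hnear : δ • e - p (u n) a ∈ interior P := (coneGauge_lt_iff hP he hδ).1 (hN n hn)
    simpa [ConeLt] using hP.add_mem_interior_s9 hmem (interior_subset hnear)

end IsConeMetric

end ConeMetric

theorem stmt_9_general {E X : Type*} [AddCommGroup E] [Module ℝ E] [TopologicalSpace E]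
    [IsTopologicalAddGroup E] [ContinuousSMul ℝ E]
    (P : Set E) (hP : IsTVSCone P) (p : X → X → E) (hp : IsConeMetric P p) :
    @CompactSpace X (coneTopology P p) ↔
      ∀ u : ℕ → X, ∃ a : X, ∃ φ : ℕ → ℕ, StrictMono φ ∧ ConeConverges P p (u ∘ φ) a := by
  obtain ⟨e, he⟩ := hP.int_nonempty
  let := hp.coneMetricSpace hP he
  simp only [hp.coneConverges_iff_tendsto hP]
  refine compactSpace_iff_seqCompactSpace.trans ⟨fun _ u => SeqCompactSpace.tendsto_subseq u,
    fun h => ⟨fun u _ => ?_⟩⟩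
  obtain ⟨a, hφ⟩ := h u
  exact ⟨a, Set.mem_univ a, hφ⟩

/-- `(X, τ_p)` is compact iff it is sequentially compact (every sequence has a
cone-convergent subsequence). -/
theorem stmt_9 {E X : Type*} [AddCommGroup E] [Module ℝ E] [TopologicalSpace E]
    [IsTopologicalAddGroup E] [ContinuousSMul ℝ E] [T2Space E] [Nonempty X]
    (P : Set E) (hP : IsTVSCone P) (p : X → X → E) (hp : IsConeMetric P p) :
    @CompactSpace X (coneTopology P p) ↔
      ∀ u : ℕ → X, ∃ a : X, ∃ φ : ℕ → ℕ, StrictMono φ ∧ ConeConverges P p (u ∘ φ) a :=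
  stmt_9_general P hP p hp
end
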